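/- arXiv:0902.1180 — 2 statements merged into one kernel-verified Lean document; each statement's English description precedes it below -/
import Mathlib

section
/- For all integers k, n, d with 0 < k < q, n ≥ 0, and d ≥ 0, the power sum S_d(k·p^n) = Σ_{a ∈ A_+, deg a = d} 1/a^{k p^n} equals 1/ℓ_d^{k p^n} in K, where ℓ_d = ∏_{i=1}^d (t − t^{q^i}). -/
/-!
Setting: `F` is the finite field `𝔽_q` with `q = Fintype.card F` elements.
`A = 𝔽_q[t]` is the polynomial ring, and `K∞ = 𝔽_q((1/t))` is the completion of
`K = 𝔽_q(t)` at the infinite place.  We realize `K∞` as the Laurent series field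
`LaurentSeries F = F((X))` with `t := X⁻¹`, so that `X = 1/t` is a uniformizer at `∞`.
Monic polynomials in `t` of degree `d` are parametrized by their lower-order
coefficients `c : Fin d → F`.
-/

open Polynomial

noncomputable section

/-- `t := X⁻¹ ∈ F((X))`, so that `F((X)) = 𝔽_q((1/t)) = K∞`. -/
def tt (F : Type*) [Field F] : LaurentSeries F := HahnSeries.single (-1 : ℤ) 1

/-- The monic polynomial in `t` of degree `d` with coefficient `c i` in degree `i < d`,
evaluated at `t`, as an element of `K∞`.  As `c` ranges over `Fin d → F`, these are
exactly the monic polynomials of degree `d` in `t`. -/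
def monicVal (F : Type*) [Field F] (d : ℕ) (c : Fin d → F) : LaurentSeries F :=
  Polynomial.aeval (tt F) (X ^ d + ∑ i : Fin d, C (c i) * X ^ (i : ℕ))

/-- The power sum `S_d(s) = ∑_{a ∈ A₊, deg a = d} 1/aˢ ∈ K ⊆ K∞`. -/
def S (F : Type*) [Field F] [Fintype F] (d s : ℕ) : LaurentSeries F :=
  ∑ c : Fin d → F, (monicVal F d c ^ s)⁻¹

/-- The Carlitz zeta value `ζ(s) = ∑_{d ≥ 0} S_d(s) ∈ K∞`. -/
def zeta (F : Type*) [Field F] [Fintype F] (s : ℕ) : LaurentSeries F :=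
  ∑' d : ℕ, S F d s

/-- The multizeta value `ζ(s₁, …, s_r) = ∑_{d₁ > d₂ > ⋯ > d_r ≥ 0} S_{d₁}(s₁)⋯S_{d_r}(s_r)`. -/
def multizeta (F : Type*) [Field F] [Fintype F] {r : ℕ} (s : Fin r → ℕ) : LaurentSeries F :=
  ∑' d : {d : Fin r → ℕ // ∀ i j : Fin r, i < j → d j < d i},
    ∏ i : Fin r, S F (d.1 i) (s i)

/-- The (possibly degenerate) multizeta value `ζ_ρ(s)` attached to a linear preorder `ρ`
on `{1, …, r}`: the sum of `S_{d₁}(s₁)⋯S_{d_r}(s_r)` over all tuples `d` such that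
`d i ≤ d j ↔ i ρ j` for all `i, j`. -/
def zetaRho (F : Type*) [Field F] [Fintype F] {r : ℕ} (ρ : Fin r → Fin r → Prop)
    (s : Fin r → ℕ) : LaurentSeries F :=
  ∑' d : {d : Fin r → ℕ // ∀ i j : Fin r, d i ≤ d j ↔ ρ i j},
    ∏ i : Fin r, S F (d.1 i) (s i)

/-- `ℓ_d = ∏_{i=1}^d (t - t^{qⁱ}) ∈ A` (with `ℓ_0 = 1`), viewed in `K∞`. -/
def ell (F : Type*) [Field F] [Fintype F] (d : ℕ) : LaurentSeries F :=
  ∏ i ∈ Finset.Icc 1 d, (tt F - tt F ^ (Fintype.card F ^ i))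

/-!
Write a monic `a` of degree `d + 1` as `X * b + θ` with `θ ∈ 𝔽_q`. For `x ∉ 𝔽_q` and `0 < k < q`
one has `∑_θ 1/(x + θ)^k = 1/(x - x^q)^k`, because `∑_θ ∏_{η ≠ θ} (X - η)^k - (-1)^k` is divisible
by `(X^q - X)^k` but has degree `< qk`. For `x = t b(t)` this gives
`x - x^q = t b(t) - t^q b(t^q) = (t - t^q) ∑ bᵢ hᵢ(t, t^q)` with `hᵢ` the complete homogeneous
polynomials, so `S_{d+1}(k)` is `(t - t^q)^(-k)` times the same sum over monics of degree `d`, with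
`tⁱ` replaced by `hᵢ(t, t^q)`. Iterating, the list of nodes `t, t^q, …, t^(q^m)` grows by one at
each step, thanks to `hᵢ(x)^q = hᵢ(x^q)` and
`hᵢ₊₁(x₀, …, x_{m-1}) - hᵢ₊₁(x₁, …, x_m) = (x₀ - x_m) hᵢ(x₀, …, x_m)`; after `d` steps one is
left with `ℓ_d^(-k)`. Exponents `k pⁿ` then follow by Frobenius.
-/

open Finset

section FiniteField

variable {F : Type*} [Field F] [Fintype F]

theorem prod_X_sub_C_univ : ∏ a : F, (X - C a) = X ^ Fintype.card F - X := by
  have hmonic : (X ^ Fintype.card F - X : F[X]).Monic :=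
    (monic_X_pow _).sub_of_left (by
      rw [degree_X_pow, degree_X]; exact_mod_cast Fintype.one_lt_card)
  have h := prod_multiset_X_sub_C_of_monic_of_roots_card_eq hmonic (by
    rw [FiniteField.roots_X_pow_card_sub_X,
      FiniteField.X_pow_card_sub_X_natDegree_eq F Fintype.one_lt_card]; rfl)
  rwa [FiniteField.roots_X_pow_card_sub_X] at h

theorem prod_sub_algebraMap {L : Type*} [CommRing L] [Algebra F L] (x : L) :
    ∏ a : F, (x - algebraMap F L a) = x ^ Fintype.card F - x := by
  simpa using congrArg (aeval x) (prod_X_sub_C_univ (F := F))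

theorem prod_erase_X_sub_C [DecidableEq F] (α : F) :
    ∏ η ∈ univ.erase α, (X - C η) = (X - C α) ^ (Fintype.card F - 1) - 1 := by
  have hfrob : (X - C α) ^ Fintype.card F = X ^ Fintype.card F - C α := by
    rw [← FiniteField.frobeniusAlgHom_apply, map_sub, ← algebraMap_eq, AlgHom.commutes,
      FiniteField.frobeniusAlgHom_apply]
  refine mul_left_cancel₀ (X_sub_C_ne_zero α) ?_
  rw [mul_prod_erase _ (fun η => X - C η) (mem_univ α), prod_X_sub_C_univ, mul_sub, mul_one,
    ← pow_succ', Nat.sub_add_cancel Fintype.card_pos, hfrob]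
  ring

theorem sum_prod_erase_X_sub_C_pow [DecidableEq F] {k : ℕ} (hk : 0 < k)
    (hkq : k < Fintype.card F) :
    ∑ θ : F, ∏ η ∈ univ.erase θ, (X - C η) ^ k = (-1) ^ k := by
  rw [← sub_eq_zero]
  refine eq_zero_of_dvd_of_natDegree_lt (p := ∏ α : F, (X - C α) ^ k) ?_ ?_
  · refine prod_dvd_of_coprime
      (fun a _ b _ hab => ((pairwise_coprime_X_sub_C Function.injective_id) hab).pow) ?_
    intro α _
    rw [← add_sum_erase _ _ (mem_univ α), add_sub_right_comm]
    refine dvd_add ?_ (dvd_sum fun θ hθ => dvd_prod_of_mem (fun η => (X - C η) ^ k)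
      (mem_erase.2 ⟨(ne_of_mem_erase hθ).symm, mem_univ α⟩))
    rw [prod_pow, prod_erase_X_sub_C]
    have h := sub_dvd_pow_sub_pow ((X - C α) ^ (Fintype.card F - 1) - 1) (-1) k
    rw [sub_neg_eq_add, sub_add_cancel] at h
    exact (pow_dvd_pow _ (show k ≤ Fintype.card F - 1 by omega)).trans h
  · rw [prod_pow, prod_X_sub_C_univ, natDegree_pow,
      FiniteField.X_pow_card_sub_X_natDegree_eq F Fintype.one_lt_card]
    calc natDegree (∑ θ : F, ∏ η ∈ univ.erase θ, (X - C η) ^ k - (-1) ^ k)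
        ≤ k * (Fintype.card F - 1) := by
          refine (natDegree_sub_le_of_le (m := k * (Fintype.card F - 1)) (n := 0)
            (natDegree_sum_le_of_forall_le _ _ fun θ _ => ?_) (by simp)).trans (by simp)
          rw [prod_pow, natDegree_pow, natDegree_finsetProd_X_sub_C_eq_card,
            card_erase_of_mem (mem_univ θ), card_univ]
      _ < k * Fintype.card F := Nat.mul_lt_mul_of_pos_left (Nat.sub_lt Fintype.card_pos one_pos) hk

theorem sum_inv_sub_algebraMap_pow {L : Type*} [Field L] [Algebra F L] {k : ℕ} (hk : 0 < k)
    (hkq : k < Fintype.card F) {x : L} (hx : ∀ θ, x - algebraMap F L θ ≠ 0) :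
    ∑ θ : F, ((x - algebraMap F L θ) ^ k)⁻¹ = ((x - x ^ Fintype.card F) ^ k)⁻¹ := by
  classical
  have hprod := prod_sub_algebraMap (F := F) x
  have hsum : ∑ θ : F, ∏ η ∈ univ.erase θ, (x - algebraMap F L η) ^ k = (-1) ^ k := by
    simpa using congrArg (aeval x) (sum_prod_erase_X_sub_C_pow (F := F) hk hkq)
  calc ∑ θ : F, ((x - algebraMap F L θ) ^ k)⁻¹
      = ∑ θ : F, (∏ η ∈ univ.erase θ, (x - algebraMap F L η) ^ k) / (x ^ Fintype.card F - x) ^ k :=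
        sum_congr rfl fun θ _ => by
          rw [← hprod, ← mul_prod_erase _ _ (mem_univ θ), prod_pow, mul_pow,
            div_mul_cancel_right₀ (pow_ne_zero _ (prod_ne_zero_iff.2 fun η _ => hx η))]
    _ = ((x - x ^ Fintype.card F) ^ k)⁻¹ := by
        rw [← sum_div, hsum, ← neg_sub, neg_pow (x - x ^ Fintype.card F),
          div_mul_cancel_left₀ (by simp)]

end FiniteField

section CompleteHomogeneous

variable {R A : Type*} [CommRing R] [CommRing A]

/-- `completeHomogeneous x m i` is `hᵢ(x 0, …, x (m - 1))`, the sum of all monomials of degree `i`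
in the first `m` of the variables `x`. -/
def completeHomogeneous (x : ℕ → R) : ℕ → ℕ → R
  | _, 0 => 1
  | 0, _ + 1 => 0
  | m + 1, i + 1 => completeHomogeneous x m (i + 1) + x m * completeHomogeneous x (m + 1) i

variable (x : ℕ → R)

@[simp]
theorem completeHomogeneous_zero_right (m : ℕ) : completeHomogeneous x m 0 = 1 := by
  rw [completeHomogeneous]

@[simp]
theorem completeHomogeneous_zero_succ (i : ℕ) : completeHomogeneous x 0 (i + 1) = 0 := by
  rw [completeHomogeneous]

theorem completeHomogeneous_succ_succ (m i : ℕ) :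
    completeHomogeneous x (m + 1) (i + 1) =
      completeHomogeneous x m (i + 1) + x m * completeHomogeneous x (m + 1) i := by
  rw [completeHomogeneous]

theorem completeHomogeneous_one (i : ℕ) : completeHomogeneous x 1 i = x 0 ^ i := by
  induction i with
  | zero => simp
  | succ i ih => rw [completeHomogeneous_succ_succ, ih, pow_succ']; simp

theorem map_completeHomogeneous (f : R →+* A) (m i : ℕ) :
    f (completeHomogeneous x m i) = completeHomogeneous (f ∘ x) m i := by
  induction m, i using completeHomogeneous.induct with
  | case1 => simp
  | case2 => simp
  | case3 m i ih₁ ih₂ => simp [completeHomogeneous_succ_succ, ih₁, ih₂]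

theorem completeHomogeneous_succ_succ' (m i : ℕ) :
    completeHomogeneous x (m + 1) (i + 1) =
      completeHomogeneous (fun j => x (j + 1)) m (i + 1) +
        x 0 * completeHomogeneous x (m + 1) i := by
  induction m generalizing i with
  | zero => simp [completeHomogeneous_one, pow_succ']
  | succ m ihm =>
    have back := completeHomogeneous_succ_succ x (m + 1)
    have back' := completeHomogeneous_succ_succ (fun j => x (j + 1)) m
    induction i with
    | zero =>
      have h₁ := back 0
      have h₂ := back' 0
      have h₃ := ihm 0
      simp only [completeHomogeneous_zero_right] at h₁ h₂ h₃ ⊢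
      linear_combination h₁ + h₃ - h₂
    | succ i ihi =>
      linear_combination
        back (i + 1) + ihm (i + 1) - back' (i + 1) + x (m + 1) * ihi - x 0 * back i

theorem completeHomogeneous_sub_completeHomogeneous_shift (m i : ℕ) :
    completeHomogeneous x m (i + 1) - completeHomogeneous (fun j => x (j + 1)) m (i + 1) =
      (x 0 - x m) * completeHomogeneous x (m + 1) i := by
  linear_combination completeHomogeneous_succ_succ' x m i - completeHomogeneous_succ_succ x m i

end CompleteHomogeneous

section MonicPoly

variable {F : Type*} [Field F] {d : ℕ}

def monicPoly (c : Fin d → F) : F[X] :=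
  X ^ d + ∑ i : Fin d, C (c i) * X ^ (i : ℕ)

theorem monicPoly_monic (c : Fin d → F) : (monicPoly c).Monic :=
  monic_X_pow_add (degree_sum_fin_lt c)

theorem monicPoly_cons (θ : F) (c : Fin d → F) :
    monicPoly (Fin.cons θ c : Fin (d + 1) → F) = X * monicPoly c + C θ := by
  simp only [monicPoly, Fin.sum_univ_succ, Fin.cons_zero, Fin.cons_succ, Fin.val_zero,
    Fin.val_succ, pow_zero, mul_one, pow_succ', mul_add, mul_sum, mul_left_comm X]
  ring

end MonicPoly

section HEval

variable {F L : Type*} [Field F] [Fintype F] [CommRing L] [Algebra F L]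

variable (F) in
/-- `hEval t m` sends `Xⁱ` to `hᵢ(t, t^q, …, t^(q^m))`; it is the divided difference of `X^m * P`
at the nodes `t, t^q, …, t^(q^m)`. -/
def hEval (t : L) (m : ℕ) : F[X] →ₗ[F] L :=
  lsum fun i => LinearMap.toSpanSingleton F L
    (completeHomogeneous (fun j => t ^ Fintype.card F ^ j) (m + 1) i)

theorem hEval_monomial (t : L) (m i : ℕ) (a : F) :
    hEval F t m (monomial i a) =
      a • completeHomogeneous (fun j => t ^ Fintype.card F ^ j) (m + 1) i := by
  simp [hEval, lsum_apply]

theorem hEval_C (t : L) (m : ℕ) (a : F) : hEval F t m (C a) = algebraMap F L a := by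
  rw [← monomial_zero_left, hEval_monomial, completeHomogeneous_zero_right,
    Algebra.algebraMap_eq_smul_one]

theorem hEval_zero_eq_aeval (t : L) (P : F[X]) : hEval F t 0 P = aeval t P := by
  induction P using Polynomial.induction_on' with
  | add P Q hP hQ => rw [map_add, map_add, hP, hQ]
  | monomial i a =>
    rw [hEval_monomial, completeHomogeneous_one, aeval_monomial, Algebra.smul_def]
    simp

theorem hEval_X_mul_sub_pow (t : L) (m : ℕ) (P : F[X]) :
    hEval F t m (X * P) - hEval F t m (X * P) ^ Fintype.card F =
      (t - t ^ Fintype.card F ^ (m + 1)) * hEval F t (m + 1) P := by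
  induction P using Polynomial.induction_on' with
  | add P Q hP hQ =>
    rw [mul_add, map_add, map_add, mul_add, ← hP, ← hQ, ← FiniteField.frobeniusAlgHom_apply,
      map_add, FiniteField.frobeniusAlgHom_apply, FiniteField.frobeniusAlgHom_apply]
    ring
  | monomial i a =>
    rw [X_mul_monomial, hEval_monomial, hEval_monomial, ← FiniteField.frobeniusAlgHom_apply,
      map_smul, ← AlgHom.coe_toRingHom, map_completeHomogeneous, ← smul_sub, mul_smul_comm]
    have hshift : (FiniteField.frobeniusAlgHom F L : L →+* L) ∘ (fun j => t ^ Fintype.card F ^ j) =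
        fun j => t ^ Fintype.card F ^ (j + 1) := by
      ext j
      simp [← pow_mul, ← pow_succ]
    rw [hshift, completeHomogeneous_sub_completeHomogeneous_shift (fun j => t ^ Fintype.card F ^ j),
      pow_zero, pow_one]

theorem hEval_monicPoly_ne_zero [IsDomain L] {t : L} (ht : Transcendental F t) (m : ℕ) {d : ℕ}
    (c : Fin d → F) :
    hEval F t m (monicPoly c) ≠ 0 := by
  induction m generalizing d with
  | zero =>
    rw [hEval_zero_eq_aeval]
    exact fun h => (monicPoly_monic c).ne_zero (transcendental_iff.mp ht _ h)
  | succ m ih =>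
    intro h
    have hfix := hEval_X_mul_sub_pow t m (monicPoly c)
    rw [h, mul_zero, sub_eq_zero] at hfix
    have hprod := prod_sub_algebraMap (F := F) (hEval F t m (X * monicPoly c))
    rw [← hfix, sub_self] at hprod
    obtain ⟨θ, -, hθ⟩ := prod_eq_zero_iff.mp hprod
    apply ih (Fin.cons (-θ) c)
    rw [monicPoly_cons, map_add, hEval_C, map_neg, ← sub_eq_add_neg, hθ]

end HEval

section PowerSums

variable {F L : Type*} [Field F] [Fintype F] [Field L] [Algebra F L] {t : L}

theorem sum_inv_hEval_monicPoly_pow (ht : Transcendental F t) {k : ℕ} (hk : 0 < k)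
    (hkq : k < Fintype.card F) (d m : ℕ) :
    ∑ c : Fin d → F, (hEval F t m (monicPoly c) ^ k)⁻¹ =
      ((∏ j ∈ range d, (t - t ^ Fintype.card F ^ (m + 1 + j))) ^ k)⁻¹ := by
  induction d generalizing m with
  | zero =>
    have h1 : hEval F t m 1 = 1 := by rw [← C_1, hEval_C, map_one]
    simp [monicPoly, h1]
  | succ d ih =>
    have hstep : ∀ c : Fin d → F, ∑ θ : F, (hEval F t m (monicPoly (Fin.cons θ c)) ^ k)⁻¹ =
        ((t - t ^ Fintype.card F ^ (m + 1)) ^ k)⁻¹ * (hEval F t (m + 1) (monicPoly c) ^ k)⁻¹ := by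
      intro c
      set W := hEval F t m (X * monicPoly c)
      have hW : ∀ θ, hEval F t m (monicPoly (Fin.cons θ c)) = W + algebraMap F L θ := fun θ => by
        rw [monicPoly_cons, map_add, hEval_C]
      calc ∑ θ : F, (hEval F t m (monicPoly (Fin.cons θ c)) ^ k)⁻¹
          = ∑ θ : F, ((W - algebraMap F L θ) ^ k)⁻¹ :=
            Fintype.sum_equiv (Equiv.neg F) _ _ fun θ => by simp [hW, sub_eq_add_neg]
        _ = ((W - W ^ Fintype.card F) ^ k)⁻¹ :=
            sum_inv_sub_algebraMap_pow hk hkq fun θ => by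
              simpa [hW, sub_eq_add_neg] using hEval_monicPoly_ne_zero ht m (Fin.cons (-θ) c)
        _ = _ := by rw [hEval_X_mul_sub_pow, mul_pow, mul_inv]
    rw [← (Fin.consEquiv fun _ => F).sum_comp, Fintype.sum_prod_type, sum_comm]
    refine (sum_congr rfl fun c _ => hstep c).trans ?_
    rw [← mul_sum, ih, prod_range_succ', mul_pow, mul_inv, mul_comm]
    simp only [add_assoc, add_comm 1, add_zero]

end PowerSums

section LaurentSeries

variable (F : Type*) [Field F]

theorem coeff_aeval_tt (P : F[X]) (n : ℕ) : (aeval (tt F) P).coeff (-n : ℤ) = P.coeff n := by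
  induction P using Polynomial.induction_on' with
  | add P Q hP hQ => simp [hP, hQ]
  | monomial m c =>
    have hc : algebraMap F (LaurentSeries F) c = HahnSeries.single 0 c := by
      simp [HahnSeries.algebraMap_apply', HahnSeries.C_apply]
    rw [aeval_monomial, hc, tt, HahnSeries.single_pow, HahnSeries.single_mul_single,
      HahnSeries.coeff_single, coeff_monomial]
    simp [eq_comm]

theorem transcendental_tt : Transcendental F (tt F) :=
  transcendental_iff.mpr fun P hP => Polynomial.ext fun n => by
    simpa [hP] using (coeff_aeval_tt F P n).symm

end LaurentSeries

/-- For all integers `k, n, d` with `0 < k < q`, `n ≥ 0`, `d ≥ 0`,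
the power sum `S_d(k·pⁿ)` equals `1/ℓ_d^{k·pⁿ}`. -/
theorem S_eq_inv_ell_pow (F : Type*) [Field F] [Fintype F] (p : ℕ) (hp : p.Prime) [CharP F p]
    (k n d : ℕ) (hk : 0 < k) (hk' : k < Fintype.card F) :
    S F d (k * p ^ n) = (ell F d ^ (k * p ^ n))⁻¹ := by
  have : CharP (LaurentSeries F) p :=
    charP_of_injective_algebraMap (algebraMap F (LaurentSeries F)).injective p
  have : ExpChar (LaurentSeries F) p := .prime hp
  have hS : S F d k = (ell F d ^ k)⁻¹ := by
    have h := sum_inv_hEval_monicPoly_pow (transcendental_tt F) hk hk' d 0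
    simp only [hEval_zero_eq_aeval, zero_add] at h
    rw [ell, ← Ico_add_one_right_eq_Icc, prod_Ico_eq_prod_range, Nat.add_sub_cancel]
    exact h
  rw [pow_mul, ← inv_pow, ← hS, S, S, sum_pow_char_pow]
  simp only [← inv_pow, ← pow_mul]
end
end

section
/- Suppose p = 2 (so q is a power of 2). Let b be an integer with 0 < b < q/3 and b ≡ 3 (mod 4). Then for every integer d ≥ 0, S_d(q+b)^3 = S_d(3q+3b) in K. -/
/-
In characteristic 2, `S² = ∑ₐ a⁻²ˢ`, hence `S³ = ∑ₐ a⁻³ˢ + ∑_{a ≠ a'} a⁻²ˢ a'⁻ˢ` (with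
`s = q + b`), and it suffices that the cross term vanishes. Write `a' = a + f` with `f ≠ 0` of degree `< d`.
Partial fractions expand `a⁻²ˢ (a + f)⁻ˢ` into terms `± binom · f⁻ᵐ · a⁻ʲ` and
`± binom · f⁻ᵐ · (a + f)⁻ʲ`; summing over `a` and `f` separately, each term carries a factor
`∑_f f⁻ᵐ`. Scaling `f` by a unit of `𝔽_q` shows that this sum vanishes unless `q - 1 ∣ m`,
and for the few `m` in range that are multiples of `q - 1` the binomial coefficient is even
by Lucas's theorem: this is where `q ≡ 0`, `b ≡ 3 (mod 4)` and `3b < q` enter.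
-/

/-!
Setting: `F` is the finite field `𝔽_q` with `q = Fintype.card F` elements.
`A = 𝔽_q[t]` is the polynomial ring, and `K∞ = 𝔽_q((1/t))` is the completion of
`K = 𝔽_q(t)` at the infinite place.  We realize `K∞` as the Laurent series field
`LaurentSeries F = F((X))` with `t := X⁻¹`, so that `X = 1/t` is a uniformizer at `∞`.
Monic polynomials in `t` of degree `d` are parametrized by their lower-order
coefficients `c : Fin d → F`.
-/

open Polynomial

noncomputable section

open Finset

theorem Nat.Prime.dvd_choose_of_digit_lt {p n k : ℕ} (hp : p.Prime) (i : ℕ)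
    (h : n / p ^ i % p < k / p ^ i % p) : p ∣ n.choose k := by
  have := Fact.mk hp
  induction i generalizing n k with
  | zero =>
    rw [pow_zero, Nat.div_one, Nat.div_one] at h
    have := Choose.choose_modEq_choose_mod_mul_choose_div_nat (p := p) (n := n) (k := k)
    rw [Nat.choose_eq_zero_of_lt h, zero_mul] at this
    exact Nat.modEq_zero_iff_dvd.mp this
  | succ i ih =>
    rw [pow_succ', ← Nat.div_div_eq_div_mul, ← Nat.div_div_eq_div_mul] at h
    exact Nat.modEq_zero_iff_dvd.mp (Choose.choose_modEq_choose_mod_mul_choose_div_nat.trans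
      (Nat.modEq_zero_iff_dvd.mpr ((ih h).mul_left _)))

theorem four_dvd_and_add_four_le_of_pow_two {n b : ℕ} (hb : b % 4 = 3) (hbq : 3 * b < 2 ^ n) :
    4 ∣ 2 ^ n ∧ 3 * b + 4 ≤ 2 ^ n := by
  have h4 : 4 ∣ 2 ^ n :=
    pow_dvd_pow 2 (show 2 ≤ n by by_contra! h; interval_cases n <;> omega)
  have h3 : ¬ 3 ∣ 2 ^ n := fun h => by
    have := Nat.prime_three.dvd_of_dvd_pow h
    omega
  exact ⟨h4, by omega⟩

theorem two_dvd_choose_of_sub_one_dvd_add {q b k : ℕ} (hq : 4 ∣ q) (hbq : 3 * b + 4 ≤ q)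
    (hb : b % 4 = 3) (hk : k < 2 * (q + b)) (hdvd : q - 1 ∣ q + b + k) :
    2 ∣ (q + b - 1 + k).choose k := by
  obtain ⟨m, hm⟩ := hdvd
  have h1 : 1 < m := Nat.lt_of_mul_lt_mul_left (a := q - 1) (by omega)
  have h4 : m < 4 := Nat.lt_of_mul_lt_mul_left (a := q - 1) (by omega)
  -- For `m = 2, 3`: `k ≡ 3, 2` but `q + b - 1 + k ≡ 1, 0 (mod 4)`; compare binary digit 1.
  interval_cases m <;> exact Nat.prime_two.dvd_choose_of_digit_lt 1 (by omega)

theorem two_dvd_choose_of_sub_one_dvd_two_mul_add {q b k : ℕ} (hq : 2 ∣ q)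
    (hbq : 3 * b + 4 ≤ q) (hk : k < q + b) (hdvd : q - 1 ∣ 2 * (q + b) + k) :
    2 ∣ (2 * (q + b) - 1 + k).choose k := by
  obtain ⟨m, hm⟩ := hdvd
  have h2 : 2 < m := Nat.lt_of_mul_lt_mul_left (a := q - 1) (by omega)
  have h4 : m < 4 := Nat.lt_of_mul_lt_mul_left (a := q - 1) (by omega)
  obtain rfl : m = 3 := by omega
  exact Nat.prime_two.dvd_choose_of_digit_lt 0 (by omega)

theorem sum_choose_mul_pow_mul_add_choose_mul_pow {R : Type*} [CommRing R] {u v : R}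
    (huv : u + v = 1) {M : ℕ} (hM : 1 ≤ M) (N : ℕ) :
    (∑ k ∈ range N, ((M + k).choose k : R) * v ^ k) * u + ((M + N - 1).choose M : R) * v ^ N
      = ∑ k ∈ range N, ((M - 1 + k).choose k : R) * v ^ k := by
  induction N with
  | zero => simp [Nat.choose_eq_zero_of_lt (show M - 1 < M by omega)]
  | succ N ih =>
    have hsymm : ((M + N).choose M : R) = ((M + N).choose N : R) := by
      rw [Nat.choose_symm_add]
    have hpascal :
        ((M + N).choose N : R) = ((M + N - 1).choose M : R) + ((M - 1 + N).choose N) := by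
      obtain ⟨m, rfl⟩ : ∃ m, M = m + 1 := ⟨M - 1, by omega⟩
      cases N with
      | zero => simp
      | succ j =>
        rw [show m + 1 + (j + 1) = m + 1 + j + 1 by omega, Nat.choose_succ_succ',
          Nat.add_sub_cancel, Nat.add_sub_cancel, Nat.choose_symm_add,
          show m + (j + 1) = m + 1 + j by omega, Nat.cast_add]
    rw [sum_range_succ, sum_range_succ, show M + (N + 1) - 1 = M + N by omega]
    linear_combination ih + ((M + N).choose N : R) * v ^ N * huv + v ^ N * hpascal
      + v ^ (N + 1) * hsymm

-- In Bernoulli trials with outcome probabilities `u` and `v`, the two sums are the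
-- probabilities that the `N`-th `v` comes before the `M`-th `u`, and vice versa.
theorem sum_choose_mul_pow_add_sum_choose_mul_pow_eq_one {R : Type*} [CommRing R] {u v : R}
    (huv : u + v = 1) {M N : ℕ} (hM : 1 ≤ M) (hN : 1 ≤ N) :
    ∑ k ∈ range M, ((N - 1 + k).choose k : R) * (u ^ k * v ^ N)
      + ∑ k ∈ range N, ((M - 1 + k).choose k : R) * (v ^ k * u ^ M) = 1 := by
  induction M, hM using Nat.le_induction with
  | base =>
    simp only [zero_add, range_one, sum_singleton, pow_zero, one_mul, Nat.choose_zero_right,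
      Nat.cast_one, Nat.sub_self, Nat.choose_self, pow_one, ← sum_mul]
    linear_combination (∑ k ∈ range N, v ^ k) * huv - geom_sum_mul v N
  | succ M hM ih =>
    have step := sum_choose_mul_pow_mul_add_choose_mul_pow huv hM N
    simp only [← mul_assoc, ← sum_mul] at ih ⊢
    rw [sum_range_succ, show N - 1 + M = M + N - 1 by omega, Nat.add_sub_cancel]
    linear_combination ih + u ^ M * step

theorem inv_pow_mul_inv_add_pow_eq_sum {K : Type*} [Field K] {a f : K} (ha : a ≠ 0)
    (hf : f ≠ 0) (haf : a + f ≠ 0) {M N : ℕ} (hM : 1 ≤ M) (hN : 1 ≤ N) :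
    (a ^ M)⁻¹ * ((a + f) ^ N)⁻¹
      = ∑ k ∈ range M, (-1) ^ k * ((N - 1 + k).choose k : K)
            * ((f ^ (N + k))⁻¹ * (a ^ (M - k))⁻¹)
        + ∑ k ∈ range N, (-1) ^ M * ((M - 1 + k).choose k : K)
            * ((f ^ (M + k))⁻¹ * ((a + f) ^ (N - k))⁻¹) := by
  have huv : -a / f + (a + f) / f = 1 := by field_simp; ring
  have hJ := congrArg (· * ((a ^ M)⁻¹ * ((a + f) ^ N)⁻¹))
    (sum_choose_mul_pow_add_sum_choose_mul_pow_eq_one huv hM hN)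
  rw [← one_mul ((a ^ M)⁻¹ * _), ← hJ, add_mul, sum_mul, sum_mul]
  congr 1 <;> refine sum_congr rfl fun k hk => ?_ <;>
  · obtain ⟨j, rfl⟩ := Nat.exists_eq_add_of_lt (mem_range.mp hk)
    rw [show k + j + 1 - k = j + 1 by omega, neg_div, neg_pow, div_pow, div_pow, pow_add,
      pow_add, pow_succ]
    field_simp
    ring

-- The sums over `e` include `e = 0`, where `L 0 = 0` and the summand is `(0 ^ m)⁻¹ = 0`.
theorem sum_sum_inv_pow_mul_inv_pow_eq {V K : Type*} [AddCommGroup V] [Fintype V]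
    [DecidableEq V] [Field K] {a L : V → K} (hadd : ∀ c e, a (c + e) = a c + L e)
    (ha : ∀ c, a c ≠ 0) (hL : ∀ e ≠ 0, L e ≠ 0) {M N : ℕ} (hM : 1 ≤ M) (hN : 1 ≤ N) :
    ∑ c, ∑ e ∈ univ.erase 0, (a c ^ M)⁻¹ * (a (c + e) ^ N)⁻¹
      = ∑ k ∈ range M, (-1) ^ k * ((N - 1 + k).choose k : K) * (∑ e, (L e ^ (N + k))⁻¹)
          * ∑ c, (a c ^ (M - k))⁻¹
        + ∑ k ∈ range N, (-1) ^ M * ((M - 1 + k).choose k : K) * (∑ e, (L e ^ (M + k))⁻¹)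
          * ∑ c, (a c ^ (N - k))⁻¹ := by
  have hL0 : L 0 = 0 := by simpa using hadd 0 0
  have shift (e : V) (n : ℕ) : ∑ c, (a (c + e) ^ n)⁻¹ = ∑ c, (a c ^ n)⁻¹ :=
    Fintype.sum_equiv (Equiv.addRight e) _ _ fun _ => rfl
  calc _ = ∑ c, ∑ e,
        (∑ k ∈ range M, (-1) ^ k * ((N - 1 + k).choose k : K)
            * ((L e ^ (N + k))⁻¹ * (a c ^ (M - k))⁻¹)
          + ∑ k ∈ range N, (-1) ^ M * ((M - 1 + k).choose k : K)
            * ((L e ^ (M + k))⁻¹ * (a (c + e) ^ (N - k))⁻¹)) := by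
        refine sum_congr rfl fun c _ => ?_
        refine (sum_congr rfl fun e he => ?_).trans (sum_erase univ ?_)
        · rw [hadd]
          exact inv_pow_mul_inv_add_pow_eq_sum (ha c) (hL e (ne_of_mem_erase he))
            (hadd c e ▸ ha _) hM hN
        · simp [hL0, zero_pow, show N ≠ 0 by omega, show M ≠ 0 by omega]
    _ = _ := by
        simp only [sum_add_distrib]
        congr 1 <;>
        · rw [sum_comm]
          simp only [sum_comm (s := (univ : Finset V)) (t := range _), ← mul_sum, shift]
          simp only [mul_assoc, sum_mul]

theorem sum_pow_three_eq_of_charTwo {V R : Type*} [AddCommGroup V] [Fintype V] [DecidableEq V]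
    [CommRing R] [CharP R 2] (x : V → R) :
    (∑ c, x c) ^ 3 = ∑ c, x c ^ 3 + ∑ c, ∑ e ∈ univ.erase 0, x c ^ 2 * x (c + e) := by
  have shift (c : V) : ∑ e, x (c + e) = ∑ c, x c :=
    Fintype.sum_equiv (Equiv.addLeft c) _ _ fun _ => rfl
  calc (∑ c, x c) ^ 3 = (∑ c, x c) ^ 2 * ∑ c, x c := by ring
    _ = ∑ c, x c ^ 2 * ∑ e, x (c + e) := by simp only [CharTwo.sum_sq, sum_mul, shift]
    _ = _ := by
      rw [← sum_add_distrib]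
      refine sum_congr rfl fun c _ => ?_
      rw [← add_sum_erase _ _ (mem_univ 0), add_zero, mul_add, mul_sum]
      ring

theorem sum_inv_pow_eq_zero_of_not_dvd {F V K : Type*} [Field F] [Fintype F] [AddCommGroup V]
    [Module F V] [Fintype V] [Field K] [Module F K] [IsScalarTower F K K] [SMulCommClass F K K]
    (L : V →ₗ[F] K) {m : ℕ} (hm : ¬ Fintype.card F - 1 ∣ m) : ∑ v, (L v ^ m)⁻¹ = 0 := by
  classical
  obtain ⟨u, hu⟩ : ∃ u : Fˣ, u ^ m ≠ 1 := by
    by_contra! h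
    rw [← Fintype.card_units, ← Nat.card_eq_fintype_card, ← IsCyclic.exponent_eq_card] at hm
    exact hm (Monoid.exponent_dvd_of_forall_pow_eq_one h)
  set c : F := ((u : F) ^ m)⁻¹
  have hc : c ≠ 1 := by
    rwa [Ne, inv_eq_one, ← Units.val_pow_eq_pow_val, Units.val_eq_one]
  have hscale : ∑ v, (L v ^ m)⁻¹ = c • ∑ v, (L v ^ m)⁻¹ := by
    rw [smul_sum]
    refine (Fintype.sum_equiv (MulAction.toPerm u) _ _ fun v => ?_).symm
    simp [c, Units.smul_def, _root_.smul_pow, smul_inv₀]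
  have : (1 - c) • ∑ v, (L v ^ m)⁻¹ = 0 := by rw [sub_smul, one_smul, ← hscale, sub_self]
  exact (smul_eq_zero.mp this).resolve_left (sub_ne_zero.mpr hc.symm)

instance {R : Type*} [CommRing R] (p : ℕ) [CharP R p] : CharP (LaurentSeries R) p :=
  charP_of_injective_ringHom HahnSeries.C_injective p

instance {R : Type*} [CommSemiring R] : IsScalarTower R (LaurentSeries R) (LaurentSeries R) :=
  ⟨fun a x y => by
    rw [← HahnSeries.C_mul_eq_smul, ← HahnSeries.C_mul_eq_smul, smul_eq_mul, smul_eq_mul,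
      mul_assoc]⟩

instance {R : Type*} [CommSemiring R] : SMulCommClass R (LaurentSeries R) (LaurentSeries R) :=
  ⟨fun a x y => by
    rw [← HahnSeries.C_mul_eq_smul, ← HahnSeries.C_mul_eq_smul, smul_eq_mul, smul_eq_mul,
      mul_left_comm]⟩

section
variable {F : Type*} [Field F] {d : ℕ}

def lowVal (F : Type*) [Field F] (d : ℕ) : (Fin d → F) →ₗ[F] LaurentSeries F :=
  Fintype.linearCombination F fun i => tt F ^ (i : ℕ)

theorem tt_pow (n : ℕ) : tt F ^ n = HahnSeries.single (-(n : ℤ)) 1 := by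
  simp [tt, HahnSeries.single_pow]

theorem coeff_lowVal (e : Fin d → F) (n : ℕ) :
    (lowVal F d e).coeff (-(n : ℤ)) = ∑ i : Fin d, if (i : ℕ) = n then e i else 0 := by
  simp [lowVal, Fintype.linearCombination_apply, tt_pow, HahnSeries.coeff_sum,
    HahnSeries.coeff_single, eq_comm]

theorem lowVal_injective : Function.Injective (lowVal F d) := by
  refine (injective_iff_map_eq_zero _).mpr fun e he => funext fun i => ?_
  have := coeff_lowVal e i
  simpa [he, Fin.val_inj] using this.symm

theorem monicVal_eq (c : Fin d → F) : monicVal F d c = tt F ^ d + lowVal F d c := by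
  simp only [monicVal, lowVal, Fintype.linearCombination_apply, map_add, map_pow, aeval_X,
    map_sum, map_mul, aeval_C, LaurentSeries.algebraMap_apply, HahnSeries.C_mul_eq_smul]

theorem monicVal_add (c e : Fin d → F) :
    monicVal F d (c + e) = monicVal F d c + lowVal F d e := by
  rw [monicVal_eq, monicVal_eq, map_add, add_assoc]

theorem monicVal_ne_zero (c : Fin d → F) : monicVal F d c ≠ 0 := by
  intro h
  have := congrArg (fun x : LaurentSeries F => x.coeff (-(d : ℤ))) h
  simp [monicVal_eq, tt_pow, coeff_lowVal,
    sum_eq_zero fun (i : Fin d) _ => if_neg i.isLt.ne] at this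
end

theorem sum_sum_inv_pow_monicVal_mul_eq_zero {F : Type*} [Field F] [Fintype F] [DecidableEq F]
    [CharP F 2] {b : ℕ} (hq : 4 ∣ Fintype.card F) (hbq : 3 * b + 4 ≤ Fintype.card F)
    (hb : b % 4 = 3) (d : ℕ) :
    ∑ c, ∑ e ∈ univ.erase 0, (monicVal F d c ^ (2 * (Fintype.card F + b)))⁻¹
      * (monicVal F d (c + e) ^ (Fintype.card F + b))⁻¹ = 0 := by
  have term (ε T : LaurentSeries F) (m n : ℕ) (h : Fintype.card F - 1 ∣ m → 2 ∣ n) :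
      ε * (n : LaurentSeries F) * (∑ e, (lowVal F d e ^ m)⁻¹) * T = 0 := by
    by_cases hm : Fintype.card F - 1 ∣ m
    · simp [(CharP.cast_eq_zero_iff (LaurentSeries F) 2 n).mpr (h hm)]
    · simp [sum_inv_pow_eq_zero_of_not_dvd (lowVal F d) hm]
  rw [sum_sum_inv_pow_mul_inv_pow_eq (monicVal_add (F := F) (d := d)) monicVal_ne_zero
      (fun e he => (map_ne_zero_iff _ lowVal_injective).mpr he) (by omega) (by omega),
    sum_eq_zero fun k hk => term _ _ _ _
      (two_dvd_choose_of_sub_one_dvd_add hq hbq hb (mem_range.mp hk)),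
    sum_eq_zero fun k hk => term _ _ _ _
      (two_dvd_choose_of_sub_one_dvd_two_mul_add (dvd_trans (by norm_num) hq) hbq
        (mem_range.mp hk)), add_zero]

theorem S_cube_of_three_mod_four_general (F : Type*) [Field F] [Fintype F] [CharP F 2]
    (b : ℕ) (hb' : 3 * b < Fintype.card F) (hb4 : b % 4 = 3) (d : ℕ) :
    S F d (Fintype.card F + b) ^ 3 = S F d (3 * Fintype.card F + 3 * b) := by
  classical
  obtain ⟨n, -, hcard⟩ := FiniteField.card F 2
  obtain ⟨hq, hbq⟩ := four_dvd_and_add_four_le_of_pow_two hb4 (hcard ▸ hb')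
  rw [← hcard] at hq hbq
  calc S F d (Fintype.card F + b) ^ 3
      = S F d (3 * (Fintype.card F + b)) + ∑ c, ∑ e ∈ univ.erase 0,
          (monicVal F d c ^ (2 * (Fintype.card F + b)))⁻¹
            * (monicVal F d (c + e) ^ (Fintype.card F + b))⁻¹ := by
        simp only [S, sum_pow_three_eq_of_charTwo, inv_pow, ← pow_mul']
    _ = S F d (3 * Fintype.card F + 3 * b) := by
        rw [sum_sum_inv_pow_monicVal_mul_eq_zero hq hbq hb4, add_zero, mul_add]

/-- Suppose `p = 2` (so `q` is a power of 2).  If `0 < b < q/3` and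
`b ≡ 3 (mod 4)`, then `S_d(q + b)³ = S_d(3q + 3b)` for every `d ≥ 0`. -/
theorem S_cube_of_three_mod_four (F : Type*) [Field F] [Fintype F] [CharP F 2]
    (b : ℕ) (hb : 0 < b) (hb' : 3 * b < Fintype.card F) (hb4 : b % 4 = 3) (d : ℕ) :
    S F d (Fintype.card F + b) ^ 3 = S F d (3 * Fintype.card F + 3 * b) :=
  S_cube_of_three_mod_four_general F b hb' hb4 d
end
end
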